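/- Let n ≥ 1, r ∈ ℕ with r ≥ 1, γ ∈ (0,1/2), and let D_ω be a dyadic grid on ℝ^n. Let I, J ∈ D_ω and let K ∈ D_ω be good (with parameters r, γ), with ℓ(K) ≤ ℓ(I) = 2ℓ(J). If max{d(K,I), d(K,J)} ≤ 2 ℓ(K)^γ ℓ(J)^{1−γ} and moreover K ∩ I = ∅ or K = I or K ∩ J = ∅, then there exists a cube Q ∈ D_ω such that I ∪ J ∪ K ⊂ Q and ℓ(Q) ≤ 2^r ℓ(K). -/

import Mathlib

/-! Let `Q` be the dyadic ancestor of `K` with `ℓ(Q) = 2^r ℓ(K)`. Since `K ⊆ Q`, a set disjoint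
from `Q` is at least as far from `K` as `∂Q` is, so goodness of `K` puts it at distance
`> 2 ℓ(K)^γ ℓ(Q)^{1-γ} ≥ 2 ℓ(K)^γ ℓ(J)^{1-γ}` from `K`. Dyadic cubes no larger than `Q` lie in `Q`
or are disjoint from it, hence `I, J ⊆ Q` as soon as `ℓ(I) ≤ ℓ(Q)`, i.e. `ℓ(J) < 2^r ℓ(K)`.
Were this to fail, the same argument applied to whichever of `I`, `J` is disjoint from `K` would
give a contradiction, and `K = I` is ruled out by size. -/

open MeasureTheory Set
open scoped ENNReal NNReal

noncomputable section

abbrev Rn (n : ℕ) := Fin n → ℝ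

/-- A (half-open, axis-parallel) cube in `ℝⁿ` (with the `ℓ^∞` metric),
given by its lower-left corner and its (positive) sidelength. -/
structure Cube (n : ℕ) where
  corner : Fin n → ℝ
  len : ℝ
  len_pos : 0 < len

namespace Cube

/-- The underlying set `∏_i [aᵢ, aᵢ + ℓ)` of a cube. -/
def toSet {n : ℕ} (I : Cube n) : Set (Rn n) :=
  {x | ∀ i, I.corner i ≤ x i ∧ x i < I.corner i + I.len}

/-- The center of a cube. -/
def center {n : ℕ} (I : Cube n) : Rn n := fun i => I.corner i + I.len / 2

/-- `λI`: the cube with the same center and sidelength `λ ℓ(I)`. -/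
def dilate {n : ℕ} (I : Cube n) (lam : ℝ) (hlam : 0 < lam) : Cube n :=
  ⟨fun i => I.center i - lam * I.len / 2, lam * I.len, mul_pos hlam I.len_pos⟩

end Cube

/-- The unit cube `𝕀 = [-1/2, 1/2)^n`. -/
def unitCube (n : ℕ) : Cube n := ⟨fun _ => -(1 / 2 : ℝ), 1, one_pos⟩

/-- The distance `d(E, F) = inf {|x - y| : x ∈ E, y ∈ F}` between two sets. -/
def sDist {α : Type*} [PseudoMetricSpace α] (E F : Set α) : ℝ :=
  sInf ((fun q : α × α => dist q.1 q.2) '' (E ×ˢ F))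

/-- The relative distance `rd(I, J) = d(I, J) / max{ℓ(I), ℓ(J)}` between two cubes. -/
def relDist {n : ℕ} (I J : Cube n) : ℝ :=
  sDist I.toSet J.toSet / max I.len J.len

/-- The cube `2^{-k}([0,1)^n + m) + Σ_{j > k} 2^{-j} ω^j` of the random dyadic grid `D_ω`. -/
def gridCube (n : ℕ) (ω : ℤ → Rn n) (k : ℤ) (m : Fin n → ℤ) : Cube n :=
  ⟨fun i => (2 : ℝ) ^ (-k) * (m i : ℝ) + ∑' j : {j : ℤ // k < j}, (2 : ℝ) ^ (-j.1) * ω j.1 i,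
   (2 : ℝ) ^ (-k), by positivity⟩

/-- Membership in the dyadic grid `D_ω`. -/
def memGrid {n : ℕ} (ω : ℤ → Rn n) (I : Cube n) : Prop :=
  ∃ (k : ℤ) (m : Fin n → ℤ), I = gridCube n ω k m

/-- `ω` is an admissible dyadic-grid parameter: `ω^j ∈ {0,1}^n` for all `j ∈ ℤ`. -/
def IsGridParam {n : ℕ} (ω : ℤ → Rn n) : Prop :=
  ∀ (j : ℤ) (i : Fin n), ω j i = 0 ∨ ω j i = 1

/-- `K ∈ D_ω` is good (with parameters `r`, `γ`) if every `J ∈ D_ω` with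
`ℓ(J) ≥ 2^r ℓ(K)` satisfies `d(K, ∂J) > 2 ℓ(K)^γ ℓ(J)^{1-γ}`. -/
def IsGoodCube {n : ℕ} (ω : ℤ → Rn n) (r : ℕ) (γ : ℝ) (K : Cube n) : Prop :=
  ∀ J : Cube n, memGrid ω J → (2 : ℝ) ^ r * K.len ≤ J.len →
    2 * K.len ^ γ * J.len ^ (1 - γ) < sDist K.toSet (frontier J.toSet)


section SetDistance

variable {α : Type*} [PseudoMetricSpace α] {E F : Set α}

lemma sDist_le_dist {x y : α} (hx : x ∈ E) (hy : y ∈ F) : sDist E F ≤ dist x y :=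
  csInf_le ⟨0, by rintro _ ⟨q, -, rfl⟩; exact dist_nonneg⟩ ⟨(x, y), ⟨hx, hy⟩, rfl⟩

lemma le_sDist {c : ℝ} (hE : E.Nonempty) (hF : F.Nonempty)
    (h : ∀ x ∈ E, ∀ y ∈ F, c ≤ dist x y) : c ≤ sDist E F :=
  le_csInf ((hE.prod hF).image _) (by rintro _ ⟨q, ⟨hq₁, hq₂⟩, rfl⟩; exact h _ hq₁ _ hq₂)

end SetDistance

section Frontier

variable {V : Type*} [NormedAddCommGroup V] [NormedSpace ℝ V]

/-- The segment from `x` to `y` is preconnected, so it meets `∂S`. -/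
lemma exists_mem_frontier_dist_le {S : Set V} {x y : V} (hx : x ∈ S) (hy : y ∉ S) :
    ∃ z ∈ frontier S, dist x z ≤ dist x y := by
  suffices h : (segment ℝ x y ∩ frontier S).Nonempty by
    obtain ⟨z, hz, hzS⟩ := h
    exact ⟨z, hzS, by linarith [dist_add_dist_of_mem_segment hz, dist_nonneg (x := z) (y := y)]⟩
  by_contra! h
  have hcover : segment ℝ x y ⊆ interior S ∪ (closure S)ᶜ := fun z hz => by
    by_cases hzS : z ∈ closure S
    · rw [closure_eq_interior_union_frontier] at hzS
      exact hzS.imp_right fun hzf => (h.subset ⟨hz, hzf⟩).elim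
    · exact Or.inr hzS
  have hxS : x ∈ interior S := (hcover (left_mem_segment ℝ x y)).resolve_right
    (not_not.2 (subset_closure hx))
  have := (convex_segment x y).isPreconnected.subset_left_of_subset_union isOpen_interior
    isClosed_closure.isOpen_compl
    (disjoint_compl_right_iff_subset.2 (interior_subset.trans subset_closure)) hcover
    ⟨x, left_mem_segment ℝ x y, hxS⟩
  exact hy (interior_subset (this (right_mem_segment ℝ x y)))

lemma sDist_frontier_le_sDist {S E F : Set V} (hE : E.Nonempty) (hF : F.Nonempty)
    (hES : E ⊆ S) (hFS : Disjoint F S) : sDist E (frontier S) ≤ sDist E F :=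
  le_sDist hE hF fun _ hx _ hy =>
    let ⟨_, hz, hxz⟩ := exists_mem_frontier_dist_le (hES hx) (hFS.notMem_of_mem_left hy)
    (sDist_le_dist hx hz).trans hxz

end Frontier

lemma Cube.toSet_nonempty {n : ℕ} (I : Cube n) : I.toSet.Nonempty :=
  ⟨I.corner, fun _ => ⟨le_rfl, lt_add_of_pos_right _ I.len_pos⟩⟩

namespace DyadicGrid

variable {n : ℕ} {ω : ℤ → Rn n}

def offset (ω : ℤ → Rn n) (k : ℤ) (i : Fin n) : ℝ :=
  ∑' j : {j : ℤ // k < j}, (2 : ℝ) ^ (-j.1) * ω j.1 i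

def natEquivIoi (k : ℤ) : ℕ ≃ {j : ℤ // k < j} where
  toFun m := ⟨k + 1 + m, by omega⟩
  invFun j := (j.1 - k - 1).toNat
  left_inv m := by dsimp only; omega
  right_inv j := Subtype.ext (by have := j.2; simp only; omega)

lemma offset_eq_tsum_nat (k : ℤ) (i : Fin n) :
    offset ω k i = ∑' m : ℕ, (2 : ℝ) ^ (-(k + 1 + m)) * ω (k + 1 + m) i :=
  ((natEquivIoi k).tsum_eq fun j => (2 : ℝ) ^ (-j.1) * ω j.1 i).symm

lemma summable_offset_nat (hω : IsGridParam ω) (k : ℤ) (i : Fin n) :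
    Summable fun m : ℕ => (2 : ℝ) ^ (-(k + 1 + m)) * ω (k + 1 + m) i := by
  have hω01 (j : ℤ) : 0 ≤ ω j i ∧ ω j i ≤ 1 := by rcases hω j i with h | h <;> simp [h]
  have hpow (m : ℕ) : (2 : ℝ) ^ (-(k + 1 + m)) = (2 : ℝ) ^ (-(k + 1)) * (1 / 2) ^ m := by
    rw [neg_add, zpow_add₀ two_ne_zero, zpow_neg (2 : ℝ) (m : ℤ), zpow_natCast, one_div, inv_pow]
  refine Summable.of_nonneg_of_le (fun m => mul_nonneg (by positivity) (hω01 _).1)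
    (fun m => ?_) (summable_geometric_two.mul_left ((2 : ℝ) ^ (-(k + 1))))
  rw [← hpow]
  exact mul_le_of_le_one_right (by positivity) (hω01 _).2

lemma offset_sub_one (hω : IsGridParam ω) (k : ℤ) (i : Fin n) :
    offset ω (k - 1) i = (2 : ℝ) ^ (-k) * ω k i + offset ω k i := by
  rw [offset_eq_tsum_nat, offset_eq_tsum_nat, (summable_offset_nat hω (k - 1) i).tsum_eq_zero_add]
  simp only [Nat.cast_zero, Nat.cast_add, Nat.cast_one]
  congr 2 <;> ring_nf

lemma mem_gridCube {k : ℤ} {m : Fin n → ℤ} {x : Rn n} :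
    x ∈ (gridCube n ω k m).toSet ↔ ∀ i, (2 : ℝ) ^ (-k) * m i + offset ω k i ≤ x i ∧
      x i < (2 : ℝ) ^ (-k) * m i + offset ω k i + (2 : ℝ) ^ (-k) :=
  Iff.rfl

lemma exists_gridCube_parent (hω : IsGridParam ω) (k : ℤ) (m : Fin n → ℤ) :
    ∃ m', (gridCube n ω k m).toSet ⊆ (gridCube n ω (k - 1) m').toSet := by
  classical
  let b : Fin n → ℤ := fun i => if ω k i = 1 then 1 else 0
  refine ⟨fun i => (m i - b i) / 2, fun x hx => mem_gridCube.2 fun i => ?_⟩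
  obtain ⟨hx₁, hx₂⟩ := mem_gridCube.1 hx i
  have hb : (b i : ℝ) = ω k i := by rcases hω k i with h | h <;> simp [b, h]
  set p : ℝ := 2 ^ (-k) with hp
  have hp₂ : (2 : ℝ) ^ (-(k - 1)) = 2 * p := by
    rw [show -(k - 1) = -k + 1 by ring, zpow_add_one₀ two_ne_zero, hp]; ring
  set a : ℤ := 2 * ((m i - b i) / 2) + b i with ha
  have ha₁ : (a : ℝ) ≤ m i := by exact_mod_cast (by omega : a ≤ m i)
  have ha₂ : (m i : ℝ) + 1 ≤ a + 2 := by exact_mod_cast (by omega : m i + 1 ≤ a + 2)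
  have hcorner : (2 : ℝ) ^ (-(k - 1)) * (((m i - b i) / 2 : ℤ) : ℝ) + offset ω (k - 1) i =
      p * a + offset ω k i := by
    rw [offset_sub_one hω, hp₂, ← hb, ha]; push_cast; ring
  rw [hcorner, hp₂]
  constructor <;> nlinarith

lemma exists_gridCube_ancestor (hω : IsGridParam ω) (k : ℤ) (m : Fin n → ℤ) (r : ℕ) :
    ∃ m', (gridCube n ω k m).toSet ⊆ (gridCube n ω (k - r) m').toSet := by
  induction r with
  | zero => exact ⟨m, by simp⟩
  | succ r ih =>
    obtain ⟨m', hm'⟩ := ih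
    obtain ⟨m'', hm''⟩ := exists_gridCube_parent hω (k - r) m'
    refine ⟨m'', hm'.trans ?_⟩
    rwa [Nat.cast_succ, ← sub_sub]

lemma eq_of_mem_gridCube {k : ℤ} {m m' : Fin n → ℤ} {x : Rn n}
    (hx : x ∈ (gridCube n ω k m).toSet) (hx' : x ∈ (gridCube n ω k m').toSet) : m = m' := by
  have hlt {m m' : Fin n → ℤ} (hx : x ∈ (gridCube n ω k m).toSet)
      (hx' : x ∈ (gridCube n ω k m').toSet) (i : Fin n) : m i < m' i + 1 := by
    obtain ⟨h₁, -⟩ := mem_gridCube.1 hx i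
    obtain ⟨-, h₂⟩ := mem_gridCube.1 hx' i
    have : (2 : ℝ) ^ (-k) * m i < (2 : ℝ) ^ (-k) * (m' i + 1) := by linarith
    exact_mod_cast lt_of_mul_lt_mul_left this (by positivity)
  funext i
  have := hlt hx hx' i
  have := hlt hx' hx i
  omega

end DyadicGrid

section GridCubes

open DyadicGrid

variable {n : ℕ} {ω : ℤ → Rn n}

lemma memGrid.subset_or_disjoint (hω : IsGridParam ω) {A B : Cube n} (hA : memGrid ω A)
    (hB : memGrid ω B) (hAB : A.len ≤ B.len) : A.toSet ⊆ B.toSet ∨ Disjoint A.toSet B.toSet := by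
  obtain ⟨k, m, rfl⟩ := hA
  obtain ⟨k', m', rfl⟩ := hB
  have hk : k' ≤ k := by
    have := (zpow_le_zpow_iff_right₀ one_lt_two).1 hAB
    omega
  obtain ⟨m'', hm''⟩ := exists_gridCube_ancestor hω k m (k - k').toNat
  rw [show k - ((k - k').toNat : ℤ) = k' by omega] at hm''
  refine (disjoint_or_nonempty_inter _ _).symm.imp (fun ⟨x, hx, hx'⟩ => ?_) id
  rwa [← eq_of_mem_gridCube (hm'' hx) hx']

lemma memGrid.exists_ancestor (hω : IsGridParam ω) {K : Cube n} (hK : memGrid ω K) (r : ℕ) :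
    ∃ Q, memGrid ω Q ∧ K.toSet ⊆ Q.toSet ∧ Q.len = 2 ^ r * K.len := by
  obtain ⟨k, m, rfl⟩ := hK
  obtain ⟨m', hm'⟩ := exists_gridCube_ancestor hω k m r
  refine ⟨_, ⟨_, m', rfl⟩, hm', ?_⟩
  change (2 : ℝ) ^ (-(k - r)) = 2 ^ r * 2 ^ (-k)
  rw [neg_sub, sub_eq_add_neg, zpow_add₀ two_ne_zero, zpow_natCast]

lemma memGrid.two_mul_len_le {A B : Cube n} (hA : memGrid ω A) (hB : memGrid ω B)
    (hAB : A.len < B.len) : 2 * A.len ≤ B.len := by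
  obtain ⟨k, m, rfl⟩ := hA
  obtain ⟨k', m', rfl⟩ := hB
  change (2 : ℝ) ^ (-k) < 2 ^ (-k') at hAB
  change 2 * (2 : ℝ) ^ (-k) ≤ 2 ^ (-k')
  rw [← zpow_one_add₀ two_ne_zero]
  exact zpow_le_zpow_right₀ one_le_two (by have := (zpow_lt_zpow_iff_right₀ one_lt_two).1 hAB; omega)

namespace IsGoodCube

variable {r : ℕ} {γ : ℝ} {K X : Cube n}

lemma lt_sDist_of_disjoint (hK : IsGoodCube ω r γ K) (hX : memGrid ω X)
    (hlen : 2 ^ r * K.len ≤ X.len) (hKX : Disjoint K.toSet X.toSet) :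
    2 * K.len ^ γ * X.len ^ (1 - γ) < sDist K.toSet X.toSet := by
  refine (hK X hX hlen).trans_le ?_
  rw [← frontier_compl]
  exact sDist_frontier_le_sDist K.toSet_nonempty X.toSet_nonempty hKX.subset_compl_right
    disjoint_compl_right

lemma lt_sDist_of_subset (hK : IsGoodCube ω r γ K) (hX : memGrid ω X)
    (hlen : 2 ^ r * K.len ≤ X.len) (hKX : K.toSet ⊆ X.toSet) {F : Set (Rn n)}
    (hF : F.Nonempty) (hFX : Disjoint F X.toSet) :
    2 * K.len ^ γ * X.len ^ (1 - γ) < sDist K.toSet F :=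
  (hK X hX hlen).trans_le (sDist_frontier_le_sDist K.toSet_nonempty hF hKX hFX)

end IsGoodCube

end GridCubes

theorem common_ancestor_adjacent_general
    (n : ℕ) (r : ℕ) (γ : ℝ) (hγ1 : γ < 1 / 2)
    (ω : ℤ → Rn n) (hω : IsGridParam ω)
    (I J K : Cube n) (hI : memGrid ω I) (hJ : memGrid ω J) (hK : memGrid ω K)
    (hKgood : IsGoodCube ω r γ K)
    (hIJ : I.len = 2 * J.len)
    (hsep : max (sDist K.toSet I.toSet) (sDist K.toSet J.toSet) ≤
      2 * K.len ^ γ * J.len ^ (1 - γ))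
    (hcase : K.toSet ∩ I.toSet = ∅ ∨ K = I ∨ K.toSet ∩ J.toSet = ∅) :
    ∃ Q : Cube n, memGrid ω Q ∧ I.toSet ∪ J.toSet ∪ K.toSet ⊆ Q.toSet ∧
      Q.len ≤ (2 : ℝ) ^ r * K.len := by
  have hγ : 0 ≤ 1 - γ := by linarith
  have hscale {X : Cube n} (hX : J.len ≤ X.len) :
      2 * K.len ^ γ * J.len ^ (1 - γ) ≤ 2 * K.len ^ γ * X.len ^ (1 - γ) :=
    mul_le_mul_of_nonneg_left (Real.rpow_le_rpow J.len_pos.le hX hγ)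
      (mul_nonneg zero_le_two (Real.rpow_nonneg K.len_pos.le γ))
  have hsepI := (le_max_left _ _).trans hsep
  have hsepJ := (le_max_right _ _).trans hsep
  have hJ_lt : J.len < 2 ^ r * K.len := by
    by_contra! hle
    rcases hcase with hKI | rfl | hKJ
    · have := hKgood.lt_sDist_of_disjoint hI (by linarith [J.len_pos])
        (disjoint_iff_inter_eq_empty.2 hKI)
      linarith [hscale (X := I) (by linarith [J.len_pos])]
    · have h2r : (1 : ℝ) ≤ 2 ^ r := one_le_pow₀ one_le_two
      linarith [le_mul_of_one_le_left K.len_pos.le h2r, J.len_pos]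
    · have := hKgood.lt_sDist_of_disjoint hJ hle (disjoint_iff_inter_eq_empty.2 hKJ)
      linarith
  obtain ⟨Q, hQ, hKQ, hQlen⟩ := hK.exists_ancestor hω r
  have hsub {X : Cube n} (hX : memGrid ω X) (hXQ : X.len ≤ Q.len)
      (hXsep : sDist K.toSet X.toSet ≤ 2 * K.len ^ γ * J.len ^ (1 - γ)) : X.toSet ⊆ Q.toSet :=
    (hX.subset_or_disjoint hω hQ hXQ).resolve_right fun hXQ' => by
      have := hKgood.lt_sDist_of_subset hQ hQlen.ge hKQ X.toSet_nonempty hXQ'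
      linarith [hscale (X := Q) (by linarith)]
  have hIQ : I.len ≤ Q.len := hIJ ▸ hJ.two_mul_len_le hQ (hQlen ▸ hJ_lt)
  exact ⟨Q, hQ, union_subset (union_subset (hsub hI hIQ hsepI) (hsub hJ (by linarith) hsepJ)) hKQ,
    hQlen.le⟩

/-- common dyadic ancestor in the adjacent case. -/
theorem common_ancestor_adjacent
    (n : ℕ) (hn : 1 ≤ n) (r : ℕ) (hr : 1 ≤ r) (γ : ℝ) (hγ0 : 0 < γ) (hγ1 : γ < 1 / 2)
    (ω : ℤ → Rn n) (hω : IsGridParam ω)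
    (I J K : Cube n) (hI : memGrid ω I) (hJ : memGrid ω J) (hK : memGrid ω K)
    (hKgood : IsGoodCube ω r γ K)
    (hKI : K.len ≤ I.len) (hIJ : I.len = 2 * J.len)
    (hsep : max (sDist K.toSet I.toSet) (sDist K.toSet J.toSet) ≤
      2 * K.len ^ γ * J.len ^ (1 - γ))
    (hcase : K.toSet ∩ I.toSet = ∅ ∨ K = I ∨ K.toSet ∩ J.toSet = ∅) :
    ∃ Q : Cube n, memGrid ω Q ∧ I.toSet ∪ J.toSet ∪ K.toSet ⊆ Q.toSet ∧
      Q.len ≤ (2 : ℝ) ^ r * K.len :=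
  common_ancestor_adjacent_general n r γ hγ1 ω hω I J K hI hJ hK hKgood hIJ hsep hcase
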